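/- For every μ with 1/2 < μ < 1, the commuter h_μ satisfies h_μ(μ) ≠ 1. -/

import Mathlib

open Set

/-- `h : [0,1] → [0,1]` satisfies the commuter functional equation for `T_μ`:
`h(x) = (1/2)·h(2μx)` for `0 ≤ x ≤ 1/2` and `h(x) = 1 - (1/2)·h(2μ(1-x))` for `1/2 < x ≤ 1`. -/
def IsCommuter (μ : ℝ) (h : ℝ → ℝ) : Prop :=
  (∀ x ∈ Icc (0:ℝ) 1, h x ∈ Icc (0:ℝ) 1) ∧
  (∀ x : ℝ, 0 ≤ x → x ≤ 1/2 → h x = (1/2) * h (2*μ*x)) ∧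
  (∀ x : ℝ, 1/2 < x → x ≤ 1 → h x = 1 - (1/2) * h (2*μ*(1-x)))

/-! `h_μ` is positive on `(0,1]`: on `(1/2,1]` it is at least `1/2`, and the doubling branch
`h(x) = h(2μx)/2` pushes any `x > 0` into `(1/2,1]` after finitely many steps since `2μ > 1`.
Hence `h(μ) = 1 - h(2μ(1-μ))/2 < 1`. -/

namespace IsCommuter

variable {μ : ℝ} {h : ℝ → ℝ}

theorem half_le_apply_of_half_lt (hc : IsCommuter μ h) (hμ0 : 0 ≤ μ) (hμ1 : μ ≤ 1) {x : ℝ}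
    (hx : 1/2 < x) (hx1 : x ≤ 1) : 1/2 ≤ h x := by
  have hy : 2*μ*(1-x) ∈ Icc (0:ℝ) 1 := ⟨by nlinarith, by nlinarith⟩
  have := (hc.1 _ hy).2
  rw [hc.2.2 x hx hx1]
  linarith

theorem apply_pos_of_half_lt_pow_mul (hc : IsCommuter μ h) (hμ0 : 0 < μ) (hμ1 : μ ≤ 1)
    (n : ℕ) {x : ℝ} (hx0 : 0 < x) (hx1 : x ≤ 1) (hxn : 1/2 < (2*μ)^n * x) : 0 < h x := by
  induction n generalizing x with
  | zero =>
    rw [pow_zero, one_mul] at hxn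
    linarith [hc.half_le_apply_of_half_lt hμ0.le hμ1 hxn hx1]
  | succ n ih =>
    rcases lt_or_ge (1/2) x with hx | hx
    · linarith [hc.half_le_apply_of_half_lt hμ0.le hμ1 hx hx1]
    · have h2μx : 0 < h (2*μ*x) :=
        ih (by positivity) (by nlinarith) (by rw [pow_succ] at hxn; linarith)
      rw [hc.2.1 x hx0.le hx]
      positivity

theorem apply_pos (hc : IsCommuter μ h) (hμ : 1/2 < μ) (hμ1 : μ ≤ 1) {x : ℝ}
    (hx : x ∈ Ioc 0 1) : 0 < h x := by
  obtain ⟨n, hn⟩ := pow_unbounded_of_one_lt ((1/2)/x) (by linarith : 1 < 2*μ)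
  rw [div_lt_iff₀ hx.1] at hn
  exact hc.apply_pos_of_half_lt_pow_mul (by linarith) hμ1 n hx.1 hx.2 hn

end IsCommuter

/-- For `1/2 < μ < 1`, the commuter satisfies `h_μ(μ) ≠ 1`. -/
theorem commuter_apply_ne_one (μ : ℝ) (hμ1 : 1/2 < μ) (hμ2 : μ < 1)
    (h : ℝ → ℝ) (hc : IsCommuter μ h) :
    h μ ≠ 1 := by
  have hy : 2*μ*(1-μ) ∈ Ioc 0 1 := ⟨by nlinarith, by nlinarith⟩
  have := hc.apply_pos hμ1 hμ2.le hy
  rw [hc.2.2 μ hμ1 hμ2.le]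
  linarith
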